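/- arXiv:1803.07627 — 8 statements merged into one kernel-verified Lean document; each statement's English description precedes it below -/
import Mathlib

section
/- Let R be a commutative ring of stable range 2 and let a, b, d ∈ R satisfy aR + bR = dR. Then there exist elements a₀, b₀ ∈ R such that a = a₀·d, b = b₀·d and a₀R + b₀R = R. -/
/-- A regular element: a nonzero element that is not a zero divisor. -/
def IsRegularElem {R : Type*} [CommRing R] (a : R) : Prop :=
  a ≠ 0 ∧ ∀ x : R, a * x = 0 → x = 0

/-- Stable range 2. -/
def HasStableRange2 (R : Type*) [CommRing R] : Prop :=
  ∀ a b c : R, Ideal.span {a, b, c} = ⊤ →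
    ∃ x y : R, Ideal.span {a + c * x, b + c * y} = ⊤

/-- Stable range 1. -/
def HasStableRange1 (S : Type*) [CommRing S] : Prop :=
  ∀ a b : S, Ideal.span {a, b} = ⊤ → ∃ y : S, IsUnit (a + b * y)

/-- Inpseudo-irreducible element: any factorization is comaximal. -/
def IsInpseudoIrreducible {R : Type*} [CommRing R] (a : R) : Prop :=
  ∀ b c : R, a = b * c → Ideal.span {b, c} = ⊤

/-- Pseudo-irreducible element. -/
def IsPseudoIrreducible {R : Type*} [CommRing R] (a : R) : Prop :=
  ∀ b c : R, a = b * c → ¬IsUnit b → ¬IsUnit c → Ideal.span {b, c} ≠ ⊤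

/-- Adequate element of a Bezout ring. -/
def IsAdequateElem {R : Type*} [CommRing R] (a : R) : Prop :=
  ∀ b : R, ∃ r s : R, a = r * s ∧ Ideal.span {r, b} = ⊤ ∧
    ∀ s' : R, ¬IsUnit s' → s' ∣ s → Ideal.span {s', b} ≠ ⊤

/-- Avoidable element. -/
def IsAvoidableElem {R : Type*} [CommRing R] (a : R) : Prop :=
  ∀ b c : R, Ideal.span {a, b, c} = ⊤ →
    ∃ r s : R, a = r * s ∧ Ideal.span {r, b} = ⊤ ∧ Ideal.span {s, c} = ⊤ ∧
      Ideal.span {r, s} = ⊤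

/-- Gelfand element. -/
def IsGelfandElem {R : Type*} [CommRing R] (a : R) : Prop :=
  ∀ b c : R, Ideal.span {a, b, c} = ⊤ →
    ∃ r s : R, a = r * s ∧ Ideal.span {r, b} = ⊤ ∧ Ideal.span {s, c} = ⊤

/-- Semipotent element. -/
def IsSemipotentElem {R : Type*} [CommRing R] (a : R) : Prop :=
  ∀ b : R,
    Ideal.Quotient.mk (Ideal.span {a}) b ∉
      Ideal.jacobson (⊥ : Ideal (R ⧸ Ideal.span ({a} : Set R))) →
    ∃ r s : R, ¬IsUnit r ∧ ¬IsUnit s ∧ a = r * s ∧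
      Ideal.span {r, b} = ⊤ ∧ Ideal.span {r, s} = ⊤

/-- Gelfand ring. -/
def IsGelfandRing (S : Type*) [CommRing S] : Prop :=
  ∀ a b : S, a + b = 1 → ∃ r s : S, (1 + a * r) * (1 + b * s) = 0

/-- Clean ring: every element is a unit plus an idempotent. -/
def IsCleanRing (S : Type*) [CommRing S] : Prop :=
  ∀ a : S, ∃ u e : S, IsUnit u ∧ IsIdempotentElem e ∧ a = u + e

/-- Von Neumann regular ring. -/
def IsVNRegularRing (S : Type*) [CommRing S] : Prop :=
  ∀ a : S, ∃ x : S, a = a * x * a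

/-- Semiregular ring: S/J(S) is von Neumann regular and idempotents lift modulo J(S). -/
def IsSemiregularRing (S : Type*) [CommRing S] : Prop :=
  IsVNRegularRing (S ⧸ Ideal.jacobson (⊥ : Ideal S)) ∧
  ∀ x : S, IsIdempotentElem (Ideal.Quotient.mk (Ideal.jacobson (⊥ : Ideal S)) x) →
    ∃ e : S, IsIdempotentElem e ∧
      Ideal.Quotient.mk (Ideal.jacobson (⊥ : Ideal S)) e =
        Ideal.Quotient.mk (Ideal.jacobson (⊥ : Ideal S)) x

/-- Semipotent ring: every principal ideal not contained in the Jacobson radical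
contains a nonzero idempotent. -/
def IsSemipotentRing (S : Type*) [CommRing S] : Prop :=
  ∀ b : S, ¬(Ideal.span {b} ≤ Ideal.jacobson (⊥ : Ideal S)) →
    ∃ e : S, e ≠ 0 ∧ IsIdempotentElem e ∧ e ∈ Ideal.span ({b} : Set S)

/-- Indecomposable ring: the only idempotents are 0 and 1. -/
def IsIndecomposableRing (S : Type*) [CommRing S] : Prop :=
  ∀ e : S, IsIdempotentElem e → e = 0 ∨ e = 1

/-- Semihereditary ring: every finitely generated ideal is projective. -/
def IsSemihereditaryRing (R : Type*) [CommRing R] : Prop :=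
  ∀ I : Ideal R, I.FG → Module.Projective R I

/-- Regular range 1. -/
def HasRegularRange1 (R : Type*) [CommRing R] : Prop :=
  ∀ a b : R, Ideal.span {a, b} = ⊤ → ∃ t : R, IsRegularElem (a + b * t)

/-- Gelfand range 1. -/
def HasGelfandRange1 (R : Type*) [CommRing R] : Prop :=
  ∀ a b : R, Ideal.span {a, b} = ⊤ → ∃ t : R, IsGelfandElem (a + b * t)

/-- A rectangular matrix admits diagonal reduction with successive divisibility
of the diagonal entries. -/
def AdmitsDiagReduction {R : Type*} [CommRing R] {n m : ℕ}
    (A : Matrix (Fin n) (Fin m) R) : Prop :=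
  ∃ (P : Matrix (Fin n) (Fin n) R) (Q : Matrix (Fin m) (Fin m) R),
    IsUnit P ∧ IsUnit Q ∧
    (∀ (i : Fin n) (j : Fin m), (i : ℕ) ≠ (j : ℕ) → (P * A * Q) i j = 0) ∧
    (∀ (k : ℕ) (hn : k + 1 < n) (hm : k + 1 < m),
      (P * A * Q) ⟨k, Nat.lt_of_succ_lt hn⟩ ⟨k, Nat.lt_of_succ_lt hm⟩ ∣
        (P * A * Q) ⟨k + 1, hn⟩ ⟨k + 1, hm⟩)

/-- Elementary divisor ring: every matrix admits diagonal reduction. -/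
def IsElementaryDivisorRing (R : Type*) [CommRing R] : Prop :=
  ∀ (n m : ℕ) (A : Matrix (Fin n) (Fin m) R), AdmitsDiagReduction A

/-!
Write `a = a₁ d`, `b = b₁ d` and `d = u a + v b`. Then `c := 1 - (u a₁ + v b₁)` kills `d`,
and `a₁, b₁, c` generate the unit ideal. Stable range 2 replaces `a₁, b₁` by the comaximal
pair `a₁ + c x, b₁ + c y`, which still multiplies `d` to `a, b` because `c d = 0`.
-/

theorem Ideal.span_triple_eq_top_of_add_eq_one {R : Type*} [CommRing R] {a b c u v w : R}
    (h : u * a + v * b + w * c = 1) : Ideal.span ({a, b, c} : Set R) = ⊤ := by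
  refine (Ideal.eq_top_iff_one _).2 (h ▸ add_mem (add_mem ?_ ?_) ?_) <;>
    exact Ideal.mul_mem_left _ _ (Ideal.subset_span (by simp))

theorem exists_cofactors_of_span_pair_eq_span_singleton {R : Type*} [CommRing R] {a b d : R}
    (h : Ideal.span ({a, b} : Set R) = Ideal.span ({d} : Set R)) :
    ∃ a₁ b₁ c : R, a = a₁ * d ∧ b = b₁ * d ∧ c * d = 0 ∧
      Ideal.span ({a₁, b₁, c} : Set R) = ⊤ := by
  obtain ⟨a₁, ha⟩ := Ideal.mem_span_singleton'.1 <| h.le <| Ideal.subset_span <|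
    Set.mem_insert a _
  obtain ⟨b₁, hb⟩ := Ideal.mem_span_singleton'.1 <| h.le <| Ideal.subset_span <|
    Set.mem_insert_of_mem a rfl
  obtain ⟨u, v, hd⟩ := Ideal.mem_span_pair.1 (h.ge (Ideal.mem_span_singleton_self d))
  refine ⟨a₁, b₁, 1 - (u * a₁ + v * b₁), ha.symm, hb.symm, ?_,
    Ideal.span_triple_eq_top_of_add_eq_one (u := u) (v := v) (w := 1) (by ring)⟩
  linear_combination -hd - u * ha - v * hb

theorem stmt1 {R : Type*} [CommRing R] (hR : HasStableRange2 R)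
    (a b d : R) (h : Ideal.span ({a, b} : Set R) = Ideal.span ({d} : Set R)) :
    ∃ a₀ b₀ : R, a = a₀ * d ∧ b = b₀ * d ∧ Ideal.span ({a₀, b₀} : Set R) = ⊤ := by
  obtain ⟨a₁, b₁, c, ha, hb, hcd, htop⟩ := exists_cofactors_of_span_pair_eq_span_singleton h
  obtain ⟨x, y, hxy⟩ := hR a₁ b₁ c htop
  refine ⟨a₁ + c * x, b₁ + c * y, ?_, ?_, hxy⟩
  · linear_combination ha - x * hcd
  · linear_combination hb - y * hcd
end

section
/- Let R be a commutative ring such that for any elements a, b ∈ R there exist elements d, a₀, b₀ ∈ R with a = d·a₀, b = d·b₀ and a₀R + b₀R = R. Then R is a Bezout ring of stable range 2. -/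
theorem stmt2 {R : Type*} [CommRing R]
    (h : ∀ a b : R, ∃ d a₀ b₀ : R, a = d * a₀ ∧ b = d * b₀ ∧
      Ideal.span ({a₀, b₀} : Set R) = ⊤) :
    IsBezout R ∧ HasStableRange2 R := by
  constructor
  · rw [IsBezout.iff_span_pair_isPrincipal]
    intro a b
    obtain ⟨d, a₀, b₀, ha, hb, hcomax⟩ := h a b
    obtain ⟨u, v, huv⟩ := Ideal.mem_span_pair.mp
      (hcomax ▸ (Submodule.mem_top : (1 : R) ∈ ⊤))
    refine ⟨d, le_antisymm ?_ ?_⟩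
    · rw [Ideal.span_le]
      rintro z (rfl | rfl)
      · exact Ideal.mem_span_singleton.mpr ⟨a₀, ha⟩
      · exact Ideal.mem_span_singleton.mpr ⟨b₀, hb⟩
    · rw [show Submodule.span R {d} = Ideal.span {d} from rfl, Ideal.span_le,
        Set.singleton_subset_iff]
      exact Ideal.mem_span_pair.mpr ⟨u, v, by linear_combination u * ha + v * hb + d * huv⟩
  · intro a b c htop
    obtain ⟨d, a₀, b₀, ha, hb, hcomax⟩ := h a b
    obtain ⟨u, v, huv⟩ := Ideal.mem_span_pair.mp
      (hcomax ▸ (Submodule.mem_top : (1 : R) ∈ ⊤))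
    have hdc : Ideal.span ({d, c} : Set R) = ⊤ := by
      rw [eq_top_iff, ← htop, Ideal.span_le]
      rintro z (rfl | rfl | rfl)
      · exact Ideal.mem_span_pair.mpr ⟨a₀, 0, by rw [ha]; ring⟩
      · exact Ideal.mem_span_pair.mpr ⟨b₀, 0, by rw [hb]; ring⟩
      · exact Ideal.mem_span_pair.mpr ⟨0, 1, by ring⟩
    obtain ⟨p, q, hpq⟩ := Ideal.mem_span_pair.mp
      (hdc ▸ (Submodule.mem_top : (1 : R) ∈ ⊤))
    refine ⟨-(q * v), q * u, ?_⟩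
    rw [eq_top_iff]
    rintro z -
    have h1 : (1 : R) ∈ Ideal.span ({a + c * -(q * v), b + c * (q * u)} : Set R) := by
      refine Ideal.mem_span_pair.mpr ⟨p * u - b₀, p * v + a₀, ?_⟩
      linear_combination (p * u - b₀) * ha + (p * v + a₀) * hb +
        (p * d + c * q) * huv + hpq
    simpa using Ideal.mul_mem_right z _ h1
end

section
/- Let R be a commutative Bezout ring and let a ∈ R be a regular inpseudo-irreducible element. Then the quotient ring R/aR is a reduced ring (it has no nonzero nilpotent elements). -/
theorem isCoprime_of_mul_left_mem_span_pair {R : Type*} [CommRing R] {d x y : R}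
    (hd : IsLeftRegular d) (h : d ∈ Ideal.span {d * x, d * y}) : IsCoprime x y := by
  obtain ⟨u, v, huv⟩ := Ideal.mem_span_pair.mp h
  exact ⟨u, v, hd (by linear_combination huv)⟩

theorem IsInpseudoIrreducible.isCoprime {R : Type*} [CommRing R] {a b c : R}
    (hin : IsInpseudoIrreducible a) (h : a = b * c) : IsCoprime b c := by
  rw [← Ideal.sup_eq_top_iff_isCoprime, ← Ideal.span_insert]
  exact hin b c h

/-- Write `a = d * a₁` and `x = d * x₁` with `d = gcd(a, x)`; then `a₁` and `x₁` are coprime and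
`a₁ ∣ d * x₁ ^ 2`, so `a₁ ∣ d`. Since `d` and `a₁` are comaximal, `a₁` is a unit. -/
theorem IsInpseudoIrreducible.dvd_of_dvd_sq {R : Type*} [CommRing R] [IsBezout R] {a x : R}
    (hreg : IsLeftRegular a) (hin : IsInpseudoIrreducible a) (hx : a ∣ x ^ 2) : a ∣ x := by
  set d := IsBezout.gcd a x
  obtain ⟨a₁, ha⟩ : d ∣ a := IsBezout.gcd_dvd_left a x
  obtain ⟨x₁, hx₁⟩ : d ∣ x := IsBezout.gcd_dvd_right a x
  have hd : IsLeftRegular d := (mul_comm d a₁ ▸ ha ▸ hreg).of_mul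
  have hcop : IsCoprime a₁ x₁ := by
    refine isCoprime_of_mul_left_mem_span_pair hd ?_
    rw [← ha, ← hx₁, ← IsBezout.span_gcd]
    exact Ideal.mem_span_singleton_self d
  have ha₁ : a₁ ∣ d * x₁ ^ 2 := by
    obtain ⟨t, ht⟩ := hx
    exact ⟨t, hd (by linear_combination ht + t * ha - (x + d * x₁) * hx₁)⟩
  have hunit : IsUnit a₁ :=
    (hin.isCoprime ha).isUnit_of_dvd' (hcop.pow_right.dvd_of_dvd_mul_right ha₁) dvd_rfl
  rw [ha, hunit.mul_right_dvd, hx₁]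
  exact dvd_mul_right d x₁

theorem IsInpseudoIrreducible.isRadical {R : Type*} [CommRing R] [IsBezout R] {a : R}
    (hreg : IsLeftRegular a) (hin : IsInpseudoIrreducible a) : IsRadical a :=
  (isRadical_iff_pow_one_lt 2 one_lt_two).mpr fun _ ↦ hin.dvd_of_dvd_sq hreg

theorem stmt3 {R : Type*} [CommRing R] [IsBezout R] (a : R)
    (hreg : IsRegularElem a) (hin : IsInpseudoIrreducible a) :
    IsReduced (R ⧸ Ideal.span ({a} : Set R)) := by
  have hreg' : IsLeftRegular a := isLeftRegular_iff_right_eq_zero_of_mul.mpr hreg.2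
  exact (Ideal.isRadical_iff_quotient_reduced _).mp
    (isRadical_iff_span_singleton.mp (hin.isRadical hreg'))
end

section
/- Let R be a commutative Bezout ring and let a ∈ R be a regular element. Then the annihilator of each element of the quotient ring R/aR is a principal ideal of R/aR. -/
theorem stmt4 {R : Type*} [CommRing R] [IsBezout R] (a : R)
    (hreg : IsRegularElem a) :
    ∀ x : R ⧸ Ideal.span ({a} : Set R),
      ∃ y : R ⧸ Ideal.span ({a} : Set R),
        ∀ z : R ⧸ Ideal.span ({a} : Set R),
          x * z = 0 ↔ z ∈ Ideal.span ({y} : Set (R ⧸ Ideal.span ({a} : Set R))) := by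
  intro x
  obtain ⟨b, rfl⟩ := Ideal.Quotient.mk_surjective x
  obtain ⟨a', ha'⟩ := IsBezout.gcd_dvd_left a b
  obtain ⟨b', hb'⟩ := IsBezout.gcd_dvd_right a b
  set d := IsBezout.gcd a b with hd
  have hdreg : ∀ t : R, d * t = 0 → t = 0 := by
    intro t ht
    apply hreg.2
    calc a * t = a' * (d * t) := by rw [ha']; ring
    _ = 0 := by rw [ht, mul_zero]
  obtain ⟨u, v, huv⟩ := IsBezout.gcd_eq_sum a b
  have hone : a' * u + b' * v = 1 := by
    have h0 : d * (a' * u + b' * v - 1) = 0 := by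
      have : d * (a' * u + b' * v) = u * a + v * b := by rw [ha', hb']; ring
      rw [mul_sub, this, huv, mul_one, sub_self]
    have := hdreg _ h0
    linear_combination this
  -- key: a ∣ b * c ↔ a' ∣ c
  have key : ∀ c : R, a ∣ b * c ↔ a' ∣ c := by
    intro c
    constructor
    · rintro ⟨t, ht⟩
      have h1 : d * (b' * c - a' * t) = 0 := by
        rw [mul_sub, ← mul_assoc, ← hb', ht, ha']; ring
      have h2 : b' * c = a' * t := sub_eq_zero.mp (hdreg _ h1)
      exact ⟨u * c + t * v, by linear_combination v * h2 - c * hone⟩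
    · rintro ⟨w, rfl⟩
      exact ⟨b' * w, by rw [ha', hb']; ring⟩
  refine ⟨Ideal.Quotient.mk _ a', fun z => ?_⟩
  obtain ⟨c, rfl⟩ := Ideal.Quotient.mk_surjective z
  rw [Ideal.mem_span_singleton, ← map_mul, Ideal.Quotient.eq_zero_iff_mem,
    Ideal.mem_span_singleton]
  constructor
  · intro h
    obtain ⟨w, hw⟩ := (key c).mp h
    exact ⟨Ideal.Quotient.mk _ w, by rw [hw, map_mul]⟩
  · rintro ⟨w, hw⟩
    obtain ⟨w', rfl⟩ := Ideal.Quotient.mk_surjective w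
    rw [← map_mul, Ideal.Quotient.mk_eq_mk_iff_sub_mem, Ideal.mem_span_singleton] at hw
    obtain ⟨k, hk⟩ := hw
    refine (key c).mpr ⟨w' + d * k, ?_⟩
    have : c - a' * w' = a' * (d * k) := by rw [hk, ha']; ring
    linear_combination this
end

section
/- Let R be a commutative Bezout ring of stable range 2 and let a ∈ R be a regular element. Then a is inpseudo-irreducible if and only if the quotient ring R/aR is a von Neumann regular ring. -/
theorem stmt6 {R : Type*} [CommRing R] [IsBezout R] (hR : HasStableRange2 R)
    (a : R) (hreg : IsRegularElem a) :
    IsInpseudoIrreducible a ↔ IsVNRegularRing (R ⧸ Ideal.span ({a} : Set R)) := by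
  constructor
  · -- forward direction
    intro hI β
    obtain ⟨b, rfl⟩ := Ideal.Quotient.mk_surjective β
    obtain ⟨a₁, ha₁⟩ := IsBezout.gcd_dvd_left a b
    obtain ⟨b₁, hb₁⟩ := IsBezout.gcd_dvd_right a b
    set d := IsBezout.gcd a b with hd
    have hdmem : d ∈ Ideal.span ({a, b} : Set R) := by
      rw [← IsBezout.span_gcd a b]; exact Ideal.subset_span rfl
    obtain ⟨u, v, huv⟩ := Ideal.mem_span_pair.mp hdmem
    have hcancel : ∀ y : R, d * y = 0 → y = 0 := by
      intro y hy
      apply hreg.2 y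
      rw [ha₁, mul_comm d a₁, mul_assoc, hy, mul_zero]
    have h1 : u * a₁ + v * b₁ = 1 := by
      have h0 : d * (u * a₁ + v * b₁ - 1) = 0 := by
        rw [ha₁, hb₁] at huv; linear_combination huv
      have := hcancel _ h0
      linear_combination this
    -- coprimality from inpseudo-irreducibility
    have hcop : Ideal.span ({d, a₁} : Set R) = ⊤ := hI d a₁ ha₁
    obtain ⟨p, q, hpq⟩ := Ideal.mem_span_pair.mp
      ((Ideal.eq_top_iff_one _).mp hcop)
    have hcd : IsCoprime d a₁ := ⟨p, q, hpq⟩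
    have hcb : IsCoprime b₁ a₁ := ⟨v, u, by linear_combination h1⟩
    have hc : IsCoprime (d * b₁ ^ 2) a₁ := hcd.mul_left (hcb.pow_left)
    obtain ⟨X, t, hXt⟩ := hc
    refine ⟨Ideal.Quotient.mk _ (X * b₁), ?_⟩
    have key : Ideal.Quotient.mk (Ideal.span ({a} : Set R))
        (b - b * (X * b₁) * b) = 0 := by
      rw [Ideal.Quotient.eq_zero_iff_mem]
      refine Ideal.mem_span_singleton'.mpr ⟨b₁ * t, ?_⟩
      rw [hb₁, ha₁]
      linear_combination (d * b₁) * hXt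
    have key2 := sub_eq_zero.mp (by rw [← map_sub]; exact key :
      Ideal.Quotient.mk (Ideal.span ({a} : Set R)) b -
        Ideal.Quotient.mk (Ideal.span ({a} : Set R)) (b * (X * b₁) * b) = 0)
    rw [map_mul, map_mul] at key2
    exact key2
  · -- backward direction
    intro hV b c hbc
    obtain ⟨x, hx⟩ := hV (Ideal.Quotient.mk _ b)
    obtain ⟨x₀, rfl⟩ := Ideal.Quotient.mk_surjective x
    have hmem : b - b * x₀ * b ∈ Ideal.span ({a} : Set R) := by
      rw [← Ideal.Quotient.eq_zero_iff_mem]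
      simp only [map_sub, map_mul]
      rw [← hx]; ring
    obtain ⟨t, ht⟩ := Ideal.mem_span_singleton'.mp hmem
    have hb : b * (1 - x₀ * b - t * c) = 0 := by
      rw [hbc] at ht; linear_combination -ht
    have hbreg : ∀ y : R, b * y = 0 → y = 0 := by
      intro y hy
      apply hreg.2 y
      rw [hbc, mul_comm b c, mul_assoc, hy, mul_zero]
    have h1 := hbreg _ hb
    rw [Ideal.eq_top_iff_one, Ideal.mem_span_pair]
    exact ⟨x₀, t, by linear_combination -h1⟩
end

section
/- Let R be a commutative Bezout ring of stable range 2 and let a ∈ R be a regular inpseudo-irreducible element. Then a is an element of almost stable range 1, i.e. the quotient ring R/aR has stable range 1. -/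
/-!
Lift a unimodular pair of `R ⧸ aR` to `b, c` with `(b, c, a)` unimodular, and use stable
range 2 to make `(b, c)` itself unimodular without changing the classes mod `a`. Write
`a = d * a₁`, `b = d * b₁` with `d` a gcd: since `a` is regular, `a₁` and `b₁` are coprime,
and inpseudo-irreducibility makes `d` and `a₁` coprime. For `t ≡ 1 mod d`, `t ≡ 0 mod a₁`,
the element `b + c * t` is `≡ c mod d` and `≡ b mod a₁`, hence coprime to `d * a₁ = a`.
-/

theorem Ideal.span_pair_eq_top_iff_isCoprime {R : Type*} [CommSemiring R] (x y : R) :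
    Ideal.span {x, y} = ⊤ ↔ IsCoprime x y := by
  rw [Ideal.span_insert, Ideal.sup_eq_top_iff_isCoprime]

theorem Ideal.sup_span_pair_eq_top_of_span_pair_mk_eq_top {R : Type*} [CommRing R]
    {I : Ideal R} {x y : R}
    (h : Ideal.span {Ideal.Quotient.mk I x, Ideal.Quotient.mk I y} = ⊤) :
    I ⊔ Ideal.span {x, y} = ⊤ := by
  have hmap := Ideal.comap_map_of_surjective (Ideal.Quotient.mk I) Ideal.Quotient.mk_surjective
    (Ideal.span {x, y})
  rwa [Ideal.map_span, Set.image_pair, h, Ideal.comap_top, ← RingHom.ker_eq_comap_bot,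
    Ideal.mk_ker, sup_comm, eq_comm] at hmap

theorem Ideal.Quotient.isUnit_mk_span_singleton_of_isCoprime {R : Type*} [CommRing R]
    {x a : R} (h : IsCoprime x a) : IsUnit (Ideal.Quotient.mk (Ideal.span {a}) x) := by
  obtain ⟨u, v, huv⟩ := h
  refine .of_mul_eq_one (Ideal.Quotient.mk _ u) ?_
  rw [← map_mul, ← map_one (Ideal.Quotient.mk (Ideal.span {a})), Ideal.Quotient.eq,
    Ideal.mem_span_singleton']
  exact ⟨-v, by linear_combination -huv⟩

theorem IsBezout.exists_isCoprime_cofactors {R : Type*} [CommRing R] [IsBezout R]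
    {a : R} (ha : a ∈ nonZeroDivisors R) (b : R) :
    ∃ d a₁ b₁ : R, a = d * a₁ ∧ b = d * b₁ ∧ IsCoprime a₁ b₁ := by
  obtain ⟨a₁, ha₁⟩ := IsBezout.gcd_dvd_left a b
  obtain ⟨b₁, hb₁⟩ := IsBezout.gcd_dvd_right a b
  obtain ⟨u, v, huv⟩ := IsBezout.gcd_eq_sum a b
  refine ⟨_, a₁, b₁, ha₁, hb₁, u, v, ?_⟩
  have hcancel : (u * a₁ + v * b₁ - 1) * a = 0 := by
    linear_combination (u * a₁ + v * b₁ - 1) * ha₁ + a₁ * (huv - u * ha₁ - v * hb₁)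
  linear_combination mem_nonZeroDivisors_iff_right.1 ha _ hcancel

theorem exists_isCoprime_add_mul_of_isCoprime {R : Type*} [CommRing R] {b c d a₁ : R}
    (hbc : IsCoprime b c) (hda₁ : IsCoprime d a₁) (hdb : d ∣ b) (ha₁b : IsCoprime a₁ b) :
    ∃ t, IsCoprime (b + c * t) (d * a₁) := by
  obtain ⟨e, f, hef⟩ := hda₁
  obtain ⟨b₁, rfl⟩ := hdb
  refine ⟨f * a₁, IsCoprime.mul_right ?_ ?_⟩
  · have hcd : IsCoprime c d := hbc.symm.of_isCoprime_of_dvd_right (dvd_mul_right d b₁)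
    convert hcd.add_mul_left_left (b₁ - c * e) using 1
    linear_combination c * hef
  · convert ha₁b.symm.add_mul_left_left (c * f) using 1
    ring

theorem stmt7 {R : Type*} [CommRing R] [IsBezout R] (hR : HasStableRange2 R)
    (a : R) (hreg : IsRegularElem a) (hin : IsInpseudoIrreducible a) :
    HasStableRange1 (R ⧸ Ideal.span ({a} : Set R)) := by
  intro B C hBC
  obtain ⟨b, rfl⟩ := Ideal.Quotient.mk_surjective B
  obtain ⟨c, rfl⟩ := Ideal.Quotient.mk_surjective C
  have hbca : Ideal.span {b, c, a} = ⊤ := by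
    rw [Set.pair_comm c a, Set.insert_comm b a, Ideal.span_insert]
    exact Ideal.sup_span_pair_eq_top_of_span_pair_mk_eq_top hBC
  obtain ⟨x, y, hxy⟩ := hR b c a hbca
  have ha : a ∈ nonZeroDivisors R :=
    mem_nonZeroDivisors_iff_right.2 fun z hz => hreg.2 z (by rwa [mul_comm])
  obtain ⟨d, a₁, b₁, had, hbd, hcop⟩ := IsBezout.exists_isCoprime_cofactors ha (b + a * x)
  have hda₁ := (Ideal.span_pair_eq_top_iff_isCoprime d a₁).1 (hin d a₁ had)
  obtain ⟨t, ht⟩ := exists_isCoprime_add_mul_of_isCoprime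
    ((Ideal.span_pair_eq_top_iff_isCoprime _ _).1 hxy) hda₁ ⟨b₁, hbd⟩
    (hbd ▸ hda₁.symm.mul_right hcop)
  refine ⟨Ideal.Quotient.mk _ t, ?_⟩
  have hmk : Ideal.Quotient.mk (Ideal.span {a}) a = 0 :=
    Ideal.Quotient.eq_zero_iff_mem.2 (Ideal.mem_span_singleton_self a)
  rw [← had] at ht
  convert Ideal.Quotient.isUnit_mk_span_singleton_of_isCoprime ht using 1
  simp only [map_add, map_mul, hmk]
  ring
end

section
/- Let R be a commutative Bezout ring of stable range 2 and let a ∈ R be a regular element. Then a is pseudo-irreducible if and only if the quotient ring R/aR is an indecomposable ring, i.e. its only idempotents are 0 and 1. -/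
open nonZeroDivisors

section

variable {R : Type*} [CommRing R]

theorem Ideal.span_pair_eq_top_iff_isCoprime_s8 {b c : R} :
    Ideal.span {b, c} = ⊤ ↔ IsCoprime b c := by
  rw [Ideal.span_insert, Ideal.sup_eq_top_iff_isCoprime]

theorem Ideal.Quotient.isIdempotentElem_mk_span_singleton_iff {a x : R} :
    IsIdempotentElem (Ideal.Quotient.mk (Ideal.span {a}) x) ↔ a ∣ x * (x - 1) := by
  rw [IsIdempotentElem, ← map_mul, Ideal.Quotient.eq, Ideal.mem_span_singleton, mul_sub_one]

theorem Ideal.Quotient.mk_span_singleton_eq_one_iff {a x : R} :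
    Ideal.Quotient.mk (Ideal.span {a}) x = 1 ↔ a ∣ x - 1 := by
  rw [← map_one (Ideal.Quotient.mk _), Ideal.Quotient.eq, Ideal.mem_span_singleton]

theorem IsRegularElem.mem_nonZeroDivisors {a : R} (ha : IsRegularElem a) : a ∈ R⁰ :=
  mem_nonZeroDivisors_iff_left.mpr ha.2

theorem IsBezout.exists_mul_eq_dvd_dvd_sub_one [IsBezout R] {a x : R} (ha : a ∈ R⁰)
    (hx : a ∣ x * (x - 1)) : ∃ b c, a = b * c ∧ b ∣ x ∧ c ∣ x - 1 := by
  obtain ⟨x₁, hx₁⟩ := IsBezout.gcd_dvd_left x a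
  obtain ⟨a₁, ha₁⟩ := IsBezout.gcd_dvd_right x a
  set g := IsBezout.gcd x a
  have hg : g ∈ R⁰ := (mul_mem_nonZeroDivisors.mp (ha₁ ▸ ha)).1
  have hcop : IsCoprime a₁ x₁ := by
    obtain ⟨u, v, huv⟩ := IsBezout.gcd_eq_sum x a
    refine ⟨v, u, (mul_cancel_left_mem_nonZeroDivisors hg).mp ?_⟩
    linear_combination huv - u * hx₁ - v * ha₁
  have hdvd : a₁ ∣ x₁ * (x - 1) := by
    rw [← dvd_cancel_left_mem_nonZeroDivisors hg, ← mul_assoc, ← hx₁, ← ha₁]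
    exact hx
  exact ⟨g, a₁, ha₁, ⟨x₁, hx₁⟩, hcop.dvd_of_dvd_mul_left hdvd⟩

theorem isIndecomposableRing_quotient_of_isPseudoIrreducible [IsBezout R] {a : R} (ha : a ∈ R⁰)
    (hpi : IsPseudoIrreducible a) : IsIndecomposableRing (R ⧸ Ideal.span {a}) := by
  intro e he
  obtain ⟨x, rfl⟩ := Ideal.Quotient.mk_surjective e
  rw [Ideal.Quotient.isIdempotentElem_mk_span_singleton_iff] at he
  obtain ⟨b, c, rfl, hb, hc⟩ := IsBezout.exists_mul_eq_dvd_dvd_sub_one ha he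
  have hbc : Ideal.span {b, c} = ⊤ :=
    Ideal.span_pair_eq_top_iff_isCoprime_s8.mpr
      ((IsCoprime.of_isCoprime_of_dvd_left ⟨1, -1, by ring⟩ hb).of_isCoprime_of_dvd_right hc)
  rw [Ideal.Quotient.eq_zero_iff_dvd, Ideal.Quotient.mk_span_singleton_eq_one_iff]
  by_cases hbu : IsUnit b
  · exact Or.inr (hbu.mul_left_dvd.mpr hc)
  · have hcu : IsUnit c := not_not.mp fun hcu ↦ hpi b c rfl hbu hcu hbc
    exact Or.inl (hcu.mul_right_dvd.mpr hb)

theorem isPseudoIrreducible_of_isIndecomposableRing_quotient {a : R}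
    (h : IsIndecomposableRing (R ⧸ Ideal.span {a})) : IsPseudoIrreducible a := by
  rintro b c rfl hb hc hbc
  obtain ⟨u, v, huv⟩ := Ideal.span_pair_eq_top_iff_isCoprime_s8.mp hbc
  have hidem : IsIdempotentElem (Ideal.Quotient.mk (Ideal.span {b * c}) (u * b)) :=
    Ideal.Quotient.isIdempotentElem_mk_span_singleton_iff.mpr
      ⟨-(u * v), by linear_combination u * b * huv⟩
  rcases h _ hidem with h0 | h1
  · obtain ⟨t, ht⟩ := (Ideal.Quotient.eq_zero_iff_dvd _ _).mp h0
    exact hc (.of_mul_eq_one (b * t + v) (by linear_combination huv - ht))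
  · obtain ⟨t, ht⟩ := Ideal.Quotient.mk_span_singleton_eq_one_iff.mp h1
    exact hb (.of_mul_eq_one (u - c * t) (by linear_combination ht))

end

theorem stmt8_general {R : Type*} [CommRing R] [IsBezout R]
    (a : R) (hreg : IsRegularElem a) :
    IsPseudoIrreducible a ↔ IsIndecomposableRing (R ⧸ Ideal.span ({a} : Set R)) :=
  ⟨isIndecomposableRing_quotient_of_isPseudoIrreducible hreg.mem_nonZeroDivisors,
    isPseudoIrreducible_of_isIndecomposableRing_quotient⟩

theorem stmt8 {R : Type*} [CommRing R] [IsBezout R] (hR : HasStableRange2 R)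
    (a : R) (hreg : IsRegularElem a) :
    IsPseudoIrreducible a ↔ IsIndecomposableRing (R ⧸ Ideal.span ({a} : Set R)) :=
  stmt8_general a hreg
end

section
/- Let R be a commutative Bezout ring of stable range 2 and let a ∈ R be a regular element. Then a is a Gelfand element if and only if the quotient ring R/aR is a Gelfand ring. -/
lemma span_pair_top_iff' {R : Type*} [CommRing R] {x y : R} :
    Ideal.span ({x, y} : Set R) = ⊤ ↔ ∃ u v : R, u * x + v * y = 1 := by
  rw [Ideal.eq_top_iff_one, Ideal.mem_span_pair]

lemma span_triple_top_iff' {R : Type*} [CommRing R] {x y z : R} :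
    Ideal.span ({x, y, z} : Set R) = ⊤ ↔ ∃ u v w : R, u * x + v * y + w * z = 1 := by
  rw [Ideal.eq_top_iff_one]
  constructor
  · intro h
    rw [show ({x, y, z} : Set R) = insert x {y, z} from rfl, Ideal.mem_span_insert] at h
    obtain ⟨u, q, hq, h1⟩ := h
    obtain ⟨v, w, hvw⟩ := Ideal.mem_span_pair.mp hq
    exact ⟨u, v, w, by rw [h1, ← hvw]; ring⟩
  · rintro ⟨u, v, w, h⟩
    rw [show ({x, y, z} : Set R) = insert x {y, z} from rfl, Ideal.mem_span_insert]
    exact ⟨u, v * y + w * z, Ideal.mem_span_pair.mpr ⟨v, w, rfl⟩, by rw [← h]; ring⟩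

theorem stmt14 {R : Type*} [CommRing R] [IsBezout R] (hR : HasStableRange2 R)
    (a : R) (hreg : IsRegularElem a) :
    IsGelfandElem a ↔ IsGelfandRing (R ⧸ Ideal.span ({a} : Set R)) := by
  set I : Ideal R := Ideal.span ({a} : Set R) with hI
  have hmk : ∀ x : R, a ∣ x → Ideal.Quotient.mk I x = 0 := by
    intro x hx
    rw [Ideal.Quotient.eq_zero_iff_mem, hI, Ideal.mem_span_singleton]
    exact hx
  constructor
  · intro hG bb cc hsum
    obtain ⟨b, rfl⟩ := Ideal.Quotient.mk_surjective bb
    obtain ⟨c, rfl⟩ := Ideal.Quotient.mk_surjective cc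
    have h1 : a ∣ b + c - 1 := by
      rw [← Ideal.mem_span_singleton, ← hI, ← Ideal.Quotient.eq_zero_iff_mem]
      have : Ideal.Quotient.mk I (b + c - 1) =
          Ideal.Quotient.mk I b + Ideal.Quotient.mk I c - 1 := by
        simp [map_sub, map_add]
      rw [this, hsum, sub_self]
    obtain ⟨t, ht⟩ := h1
    have htop : Ideal.span ({a, b, c} : Set R) = ⊤ := by
      rw [span_triple_top_iff']
      exact ⟨-t, 1, 1, by linear_combination ht⟩
    obtain ⟨r, s, hrs, hrb, hsc⟩ := hG b c htop
    obtain ⟨p, q, hpq⟩ := span_pair_top_iff'.mp hrb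
    obtain ⟨p', q', hpq'⟩ := span_pair_top_iff'.mp hsc
    refine ⟨-(Ideal.Quotient.mk I q), -(Ideal.Quotient.mk I q'), ?_⟩
    have : (1 + Ideal.Quotient.mk I b * -(Ideal.Quotient.mk I q)) *
        (1 + Ideal.Quotient.mk I c * -(Ideal.Quotient.mk I q')) =
        Ideal.Quotient.mk I ((1 - b * q) * (1 - c * q')) := by
      simp only [map_mul, map_sub, map_one]
      ring
    rw [this]
    apply hmk
    have e1 : 1 - b * q = p * r := by linear_combination -hpq
    have e2 : 1 - c * q' = p' * s := by linear_combination -hpq'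
    rw [e1, e2]
    exact ⟨p * p', by rw [hrs]; ring⟩
  · intro hG b c htop
    obtain ⟨u, v, w, huvw⟩ := span_triple_top_iff'.mp htop
    have hsum : Ideal.Quotient.mk I (v * b) + Ideal.Quotient.mk I (w * c) = 1 := by
      have h0 : Ideal.Quotient.mk I (u * a) = 0 := hmk _ ⟨u, mul_comm u a⟩
      have h2 := congrArg (Ideal.Quotient.mk I) huvw
      simp only [map_add, map_one] at h2
      rw [h0] at h2
      linear_combination h2
    obtain ⟨rr, ss, hprod⟩ := hG _ _ hsum
    obtain ⟨x, rfl⟩ := Ideal.Quotient.mk_surjective rr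
    obtain ⟨y, rfl⟩ := Ideal.Quotient.mk_surjective ss
    set B : R := 1 + v * b * x with hB
    set C : R := 1 + w * c * y with hC
    have hBC : a ∣ B * C := by
      rw [← Ideal.mem_span_singleton, ← hI, ← Ideal.Quotient.eq_zero_iff_mem]
      have : Ideal.Quotient.mk I (B * C) =
          (1 + Ideal.Quotient.mk I (v * b) * Ideal.Quotient.mk I x) *
          (1 + Ideal.Quotient.mk I (w * c) * Ideal.Quotient.mk I y) := by
        simp only [hB, hC, map_mul, map_add, map_one]
        try ring
      rw [this, hprod]
    obtain ⟨z, hz⟩ := hBC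
    -- Bezout: r = gcd a B
    set r : R := IsBezout.gcd a B with hr
    have hra : r ∣ a := IsBezout.gcd_dvd_left a B
    have hrB : r ∣ B := IsBezout.gcd_dvd_right a B
    obtain ⟨p, q, hpq⟩ := IsBezout.gcd_eq_sum a B
    obtain ⟨s, hs⟩ := hra
    obtain ⟨B', hB'⟩ := hrB
    have hrreg : ∀ t : R, r * t = 0 → t = 0 := by
      intro t ht
      apply hreg.2
      rw [hs]
      calc r * s * t = s * (r * t) := by ring
        _ = 0 := by rw [ht, mul_zero]
    have h1sB' : p * s + q * B' = 1 := by
      have : r * (p * s + q * B' - 1) = 0 := by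
        have : r = p * a + q * B := hpq.symm
        calc r * (p * s + q * B' - 1) = p * (r * s) + q * (r * B') - r := by ring
          _ = p * a + q * B - r := by rw [← hs, ← hB']
          _ = 0 := by rw [← this]; ring
      have := hrreg _ this
      linear_combination this
    have hB'C : B' * C = s * z := by
      have : r * (B' * C - s * z) = 0 := by
        calc r * (B' * C - s * z) = (r * B') * C - (r * s) * z := by ring
          _ = B * C - a * z := by rw [← hB', ← hs]
          _ = 0 := by rw [hz]; ring
      have := hrreg _ this
      linear_combination this
    refine ⟨r, s, hs, ?_, ?_⟩
    · rw [span_pair_top_iff']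
      exact ⟨B', -(v * x), by rw [mul_comm B' r, ← hB', hB]; ring⟩
    · by_contra hne
      obtain ⟨m, hm, hle⟩ := Ideal.exists_le_maximal _ hne
      have hsm : s ∈ m := hle (Ideal.subset_span (by simp))
      have hcm : c ∈ m := hle (Ideal.subset_span (by simp))
      have hBCm : B' * C ∈ m := by rw [hB'C]; exact Ideal.mul_mem_right _ _ hsm
      rcases (hm.isPrime.mem_or_mem hBCm) with hB'm | hCm
      · have : (1 : R) ∈ m := by
          have : p * s + q * B' ∈ m :=
            Ideal.add_mem _ (Ideal.mul_mem_left _ _ hsm) (Ideal.mul_mem_left _ _ hB'm)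
          rwa [h1sB'] at this
        exact hm.ne_top (Ideal.eq_top_of_isUnit_mem _ this isUnit_one)
      · have : (1 : R) ∈ m := by
          have h2 : w * c * y ∈ m := by
            have := Ideal.mul_mem_left m w hcm
            have := Ideal.mul_mem_right y m this
            convert this using 1
          have : C - w * c * y ∈ m := Ideal.sub_mem _ hCm h2
          simpa [hC] using this
        exact hm.ne_top (Ideal.eq_top_of_isUnit_mem _ this isUnit_one)
end
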